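/- arXiv:1504.05597 — 4 statements merged into one kernel-verified Lean document; each statement's English description precedes it below -/
import Mathlib

section
/- For every real q with 0 ≤ q < 1/2 and every integer d ≥ 1, the ratio (∑_{b=0}^{⌊qnd⌋} N_d(n,b)) / (d+1)^n tends to 0 as n → ∞, where N_d(n,b) is the number of n-tuples of integers in {0,…,d} summing to b. -/
open Finset Real

private lemma exp_neg_le (x : ℝ) (hx : 0 ≤ x) : Real.exp (-x) ≤ 1 - x + x ^ 2 := by
  have h1 : 1 + x ≤ Real.exp x := by linarith [Real.add_one_le_exp x]
  have h2 : Real.exp (-x) * Real.exp x = 1 := by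
    rw [← Real.exp_add]; simp
  nlinarith [Real.exp_pos (-x), Real.exp_pos x]

private lemma sum_exp_pow (n d : ℕ) (s : ℝ) :
    ∑ f : Fin n → Fin (d + 1), Real.exp (-(s * (∑ j, (f j : ℕ) : ℕ))) =
      (∑ v : Fin (d + 1), Real.exp (-(s * v))) ^ n := by
  rw [Fintype.sum_pow]
  refine Finset.sum_congr rfl fun f _ => ?_
  rw [← Real.exp_sum]
  congr 1
  push_cast
  rw [Finset.mul_sum]
  simp

set_option maxHeartbeats 1600000 in
/-- For `0 ≤ q < 1/2` and `d ≥ 1`, the ratio `(∑_{b=0}^{⌊qnd⌋} N_d(n,b)) / (d+1)^n`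
tends to `0` as `n → ∞`, where `N_d(n,b)` is the number of `n`-tuples of integers in
`{0,…,d}` summing to `b`. -/
theorem stmt3 (q : ℝ) (hq0 : 0 ≤ q) (hq : q < 1 / 2) (d : ℕ) (hd : 1 ≤ d) :
    Filter.Tendsto
      (fun n : ℕ =>
        (∑ b ∈ Finset.range (⌊q * n * d⌋₊ + 1),
          (Fintype.card {f : Fin n → Fin (d + 1) // ∑ j, (f j : ℕ) = b} : ℝ)) /
          (d + 1 : ℝ) ^ n)
      Filter.atTop (nhds 0) := by
  have hdR : (1 : ℝ) ≤ (d : ℝ) := by exact_mod_cast hd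
  obtain ⟨s, hs_pos, hsd⟩ : ∃ s : ℝ, 0 < s ∧ s * d = (1 / 2 - q) / 2 := by
    refine ⟨(1 / 2 - q) / (2 * d), by apply div_pos <;> nlinarith, ?_⟩
    field_simp
  set G : ℝ := ∑ v : Fin (d + 1), Real.exp (-(s * v)) with hG_def
  have hG_pos : 0 < G := Finset.sum_pos (fun v _ => Real.exp_pos _) ⟨0, Finset.mem_univ _⟩
  set c : ℝ := Real.exp (s * q * d) * G / (d + 1) with hc_def
  have hd1 : (0 : ℝ) < (d : ℝ) + 1 := by positivity
  have hc_nonneg : 0 ≤ c := by positivity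
  -- c < 1
  have hc_lt : c < 1 := by
    have hGb : G ≤ (d + 1 : ℝ) - s * (d * (d + 1) / 2) + s ^ 2 * ((d + 1) * d ^ 2) := by
      have h1 : G = ∑ j ∈ Finset.range (d + 1), Real.exp (-(s * j)) := by
        rw [hG_def]
        exact Fin.sum_univ_eq_sum_range (fun j => Real.exp (-(s * j))) (d + 1)
      rw [h1]
      have h2 : ∀ j ∈ Finset.range (d + 1),
          Real.exp (-(s * j)) ≤ 1 - s * j + s ^ 2 * j ^ 2 := by
        intro j hj
        have := exp_neg_le (s * j) (by positivity)
        nlinarith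
      calc ∑ j ∈ Finset.range (d + 1), Real.exp (-(s * j))
          ≤ ∑ j ∈ Finset.range (d + 1), (1 - s * j + s ^ 2 * (j : ℝ) ^ 2) :=
            Finset.sum_le_sum h2
        _ ≤ (d + 1 : ℝ) - s * (d * (d + 1) / 2) + s ^ 2 * ((d + 1) * d ^ 2) := by
            rw [Finset.sum_add_distrib, Finset.sum_sub_distrib]
            have hsum1 : ∑ j ∈ Finset.range (d + 1), (1 : ℝ) = (d + 1 : ℝ) := by simp
            have hsum2 : ∑ j ∈ Finset.range (d + 1), s * (j : ℝ) = s * (d * (d + 1) / 2) := by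
              rw [← Finset.mul_sum]
              congr 1
              have hg := Finset.sum_range_id_mul_two (d + 1)
              have hg' : ((∑ j ∈ Finset.range (d + 1), j : ℕ) : ℝ) * 2 = (d + 1) * d := by
                exact_mod_cast congrArg (Nat.cast : ℕ → ℝ) hg
              have hcast : ∑ j ∈ Finset.range (d + 1), (j : ℝ) = ((∑ j ∈ Finset.range (d + 1), j : ℕ) : ℝ) := by push_cast; ring
              rw [hcast]
              linarith
            have hsum3 : ∑ j ∈ Finset.range (d + 1), s ^ 2 * (j : ℝ) ^ 2 ≤ s ^ 2 * ((d + 1) * d ^ 2) := by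
              rw [← Finset.mul_sum]
              apply mul_le_mul_of_nonneg_left _ (by positivity)
              calc ∑ j ∈ Finset.range (d + 1), (j : ℝ) ^ 2
                  ≤ ∑ j ∈ Finset.range (d + 1), (d : ℝ) ^ 2 := by
                    apply Finset.sum_le_sum
                    intro j hj
                    have : (j : ℝ) ≤ d := by
                      exact_mod_cast Nat.lt_succ_iff.mp (Finset.mem_range.mp hj)
                    nlinarith [Nat.cast_nonneg (α := ℝ) j]
                _ = (d + 1 : ℝ) * d ^ 2 := by
                    rw [Finset.sum_const, Finset.card_range]
                    ring
            rw [hsum1, hsum2]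
            linarith
    -- exp(s q d) ≤ 1/(1 - s q d)
    have hsqd_lt : s * q * d < 1 / 4 := by nlinarith [hsd]
    have hsqd_nonneg : 0 ≤ s * q * d := by positivity
    have hexp : Real.exp (s * q * d) * (1 - s * q * d) ≤ 1 := by
      have h1 : 1 - s * q * d ≤ Real.exp (-(s * q * d)) := by
        nlinarith [Real.add_one_le_exp (-(s * q * d))]
      have h2 : Real.exp (s * q * d) * Real.exp (-(s * q * d)) = 1 := by
        rw [← Real.exp_add]; simp
      nlinarith [Real.exp_pos (s * q * d)]
    -- goal: exp(sqd) * G < d + 1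
    rw [hc_def, div_lt_one hd1]
    have he : 0 < 1 / 2 - q := by linarith
    have h2 : s ^ 2 * (d : ℝ) ^ 2 = ((1 / 2 - q) / 2) ^ 2 := by
      rw [show s ^ 2 * (d : ℝ) ^ 2 = (s * d) ^ 2 by ring, hsd]
    have h3 : s * q * (d : ℝ) = q * ((1 / 2 - q) / 2) := by
      rw [show s * q * (d : ℝ) = q * (s * d) by ring, hsd]
    have hkey : (1 : ℝ) - s * d / 2 + s ^ 2 * d ^ 2 < 1 - s * q * d := by
      nlinarith [hsd, h2, h3, mul_pos he he]
    have hGb' : G ≤ (d + 1) * (1 - s * d / 2 + s ^ 2 * d ^ 2) := by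
      have hring : (d + 1 : ℝ) * (1 - s * d / 2 + s ^ 2 * d ^ 2) =
          (d + 1 : ℝ) - s * (d * (d + 1) / 2) + s ^ 2 * ((d + 1) * d ^ 2) := by ring
      linarith
    have hpos : (0 : ℝ) < 1 - s * d / 2 + s ^ 2 * d ^ 2 := by
      nlinarith [hsd, h2, hq0, hq, sq_nonneg (1 / 2 - q)]
    calc Real.exp (s * q * d) * G
        ≤ Real.exp (s * q * d) * ((d + 1) * (1 - s * d / 2 + s ^ 2 * d ^ 2)) := by
          exact mul_le_mul_of_nonneg_left hGb' (Real.exp_pos _).le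
      _ < Real.exp (s * q * d) * ((d + 1) * (1 - s * q * d)) := by
          apply mul_lt_mul_of_pos_left _ (Real.exp_pos _)
          exact mul_lt_mul_of_pos_left hkey hd1
      _ = (d + 1) * (Real.exp (s * q * d) * (1 - s * q * d)) := by ring
      _ ≤ (d + 1) * 1 := mul_le_mul_of_nonneg_left hexp hd1.le
      _ = d + 1 := mul_one _
  -- main bound: term n ≤ c ^ n
  have hbound : ∀ n : ℕ,
      (∑ b ∈ Finset.range (⌊q * n * d⌋₊ + 1),
        (Fintype.card {f : Fin n → Fin (d + 1) // ∑ j, (f j : ℕ) = b} : ℝ)) /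
        (d + 1 : ℝ) ^ n ≤ c ^ n := by
    intro n
    set m : ℕ := ⌊q * n * d⌋₊ with hm_def
    have hm_le : (m : ℝ) ≤ q * n * d := Nat.floor_le (by positivity)
    -- step 1: numerator ≤ exp(s m) * G^n
    have hstep1 :
        (∑ b ∈ Finset.range (m + 1),
          (Fintype.card {f : Fin n → Fin (d + 1) // ∑ j, (f j : ℕ) = b} : ℝ)) ≤
          Real.exp (s * m) * G ^ n := by
      have hcard : ∀ b, (Fintype.card {f : Fin n → Fin (d + 1) // ∑ j, (f j : ℕ) = b} : ℝ) =
          ∑ f ∈ Finset.univ.filter (fun f : Fin n → Fin (d + 1) => ∑ j, (f j : ℕ) = b), (1 : ℝ) := by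
        intro b
        rw [Fintype.card_subtype]
        simp
      calc (∑ b ∈ Finset.range (m + 1),
            (Fintype.card {f : Fin n → Fin (d + 1) // ∑ j, (f j : ℕ) = b} : ℝ))
          ≤ ∑ b ∈ Finset.range (m + 1),
            ∑ f ∈ Finset.univ.filter (fun f : Fin n → Fin (d + 1) => ∑ j, (f j : ℕ) = b),
              Real.exp (s * m) * Real.exp (-(s * (∑ j, (f j : ℕ) : ℕ))) := by
            apply Finset.sum_le_sum
            intro b hb
            rw [hcard b]
            apply Finset.sum_le_sum
            intro f hf
            have hfb : (∑ j, (f j : ℕ)) = b := (Finset.mem_filter.mp hf).2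
            rw [hfb]
            rw [← Real.exp_add]
            have hbm : (b : ℝ) ≤ m := by
              exact_mod_cast Nat.lt_succ_iff.mp (Finset.mem_range.mp hb)
            have : (0 : ℝ) ≤ s * m + -(s * b) := by nlinarith
            calc (1 : ℝ) = Real.exp 0 := Real.exp_zero.symm
              _ ≤ Real.exp (s * m + -(s * b)) := Real.exp_le_exp.mpr this
        _ ≤ ∑ f : Fin n → Fin (d + 1),
              Real.exp (s * m) * Real.exp (-(s * (∑ j, (f j : ℕ) : ℕ))) := by
            apply Finset.sum_fiberwise_le_sum_of_sum_fiber_nonneg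
            intro b _
            apply Finset.sum_nonneg
            intro f _
            positivity
        _ = Real.exp (s * m) * G ^ n := by
            rw [← Finset.mul_sum, sum_exp_pow n d s]
    -- step 2: exp(s m) ≤ exp(s q d)^n
    have hstep2 : Real.exp (s * m) ≤ Real.exp (s * q * d) ^ n := by
      rw [← Real.exp_nat_mul]
      apply Real.exp_le_exp.mpr
      have : (s * (q * n * d)) = n * (s * q * d) := by ring
      nlinarith [hm_le, hs_pos]
    calc (∑ b ∈ Finset.range (m + 1),
          (Fintype.card {f : Fin n → Fin (d + 1) // ∑ j, (f j : ℕ) = b} : ℝ)) /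
          (d + 1 : ℝ) ^ n
        ≤ (Real.exp (s * m) * G ^ n) / (d + 1 : ℝ) ^ n := by gcongr
      _ ≤ (Real.exp (s * q * d) ^ n * G ^ n) / (d + 1 : ℝ) ^ n := by
          gcongr
      _ = c ^ n := by
          rw [hc_def, div_pow, mul_pow]
  have hnonneg : ∀ n : ℕ,
      0 ≤ (∑ b ∈ Finset.range (⌊q * n * d⌋₊ + 1),
        (Fintype.card {f : Fin n → Fin (d + 1) // ∑ j, (f j : ℕ) = b} : ℝ)) /
        (d + 1 : ℝ) ^ n := by
    intro n
    positivity
  have hpow : Filter.Tendsto (fun n : ℕ => c ^ n) Filter.atTop (nhds 0) :=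
    tendsto_pow_atTop_nhds_zero_of_lt_one hc_nonneg hc_lt
  exact tendsto_of_tendsto_of_tendsto_of_le_of_le tendsto_const_nhds hpow hnonneg hbound
end

section
/- The tensor rank of the W-state tensor W₃ = e₁⊗e₀⊗e₀ + e₀⊗e₁⊗e₀ + e₀⊗e₀⊗e₁ ∈ (ℂ²)^{⊗3} equals 3. -/
/-- The rank of a 3-tensor in coordinates: the least `r` such that the tensor is a sum
of `r` simple tensors. -/
noncomputable def trank {α β γ : Type*} (t : α → β → γ → ℂ) : ℕ :=
  sInf {r | ∃ (u : Fin r → α → ℂ) (v : Fin r → β → ℂ) (w : Fin r → γ → ℂ),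
    ∀ i j k, t i j k = ∑ m, u m i * v m j * w m k}

/-- The coordinates of the W-state tensor
`W₃ = e₁⊗e₀⊗e₀ + e₀⊗e₁⊗e₀ + e₀⊗e₀⊗e₁` in `(ℂ²)^{⊗3}`. -/
def W3 : Fin 2 → Fin 2 → Fin 2 → ℂ := fun i j k =>
  if (i, j, k) = (1, 0, 0) ∨ (i, j, k) = (0, 1, 0) ∨ (i, j, k) = (0, 0, 1) then 1 else 0

/-- No 2-term decomposition of W3 exists. -/
lemma no_two_term (u v w : Fin 2 → Fin 2 → ℂ)
    (h : ∀ i j k, W3 i j k = ∑ m, u m i * v m j * w m k) : False := by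
  have q1 : u 0 0 * v 0 0 * w 0 0 + u 1 0 * v 1 0 * w 1 0 = 0 := by
    have := h 0 0 0; simpa [W3, Fin.sum_univ_two, Prod.ext_iff] using this.symm
  have q2 : u 0 1 * v 0 0 * w 0 0 + u 1 1 * v 1 0 * w 1 0 = 1 := by
    have := h 1 0 0; simpa [W3, Fin.sum_univ_two, Prod.ext_iff] using this.symm
  have q3 : u 0 0 * v 0 1 * w 0 0 + u 1 0 * v 1 1 * w 1 0 = 1 := by
    have := h 0 1 0; simpa [W3, Fin.sum_univ_two, Prod.ext_iff] using this.symm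
  have q4 : u 0 0 * v 0 0 * w 0 1 + u 1 0 * v 1 0 * w 1 1 = 1 := by
    have := h 0 0 1; simpa [W3, Fin.sum_univ_two, Prod.ext_iff] using this.symm
  have q5 : u 0 1 * v 0 1 * w 0 0 + u 1 1 * v 1 1 * w 1 0 = 0 := by
    have := h 1 1 0; simpa [W3, Fin.sum_univ_two, Prod.ext_iff] using this.symm
  have q6 : u 0 1 * v 0 0 * w 0 1 + u 1 1 * v 1 0 * w 1 1 = 0 := by
    have := h 1 0 1; simpa [W3, Fin.sum_univ_two, Prod.ext_iff] using this.symm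
  have q7 : u 0 0 * v 0 1 * w 0 1 + u 1 0 * v 1 1 * w 1 1 = 0 := by
    have := h 0 1 1; simpa [W3, Fin.sum_univ_two, Prod.ext_iff] using this.symm
  have q8 : u 0 1 * v 0 1 * w 0 1 + u 1 1 * v 1 1 * w 1 1 = 0 := by
    have := h 1 1 1; simpa [W3, Fin.sum_univ_two, Prod.ext_iff] using this.symm
  set D : ℂ := (u 0 0 * u 1 1 - u 1 0 * u 0 1) * (v 0 0 * v 1 1 - v 1 0 * v 0 1) with hD
  have hee : D * (w 0 0 * w 1 0) = -1 := by
    have : D * (w 0 0 * w 1 0) =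
        (u 0 0 * v 0 0 * w 0 0 + u 1 0 * v 1 0 * w 1 0) * (u 0 1 * v 0 1 * w 0 0 + u 1 1 * v 1 1 * w 1 0) -
        (u 0 0 * v 0 1 * w 0 0 + u 1 0 * v 1 1 * w 1 0) * (u 0 1 * v 0 0 * w 0 0 + u 1 1 * v 1 0 * w 1 0) := by ring
    rw [q1, q5, q3, q2] at this; simpa using this
  have hef : D * (w 0 0 * w 1 1 + w 1 0 * w 0 1) = 0 := by
    have : D * (w 0 0 * w 1 1 + w 1 0 * w 0 1) =
        (u 0 0 * v 0 0 * w 0 0 + u 1 0 * v 1 0 * w 1 0) * (u 0 1 * v 0 1 * w 0 1 + u 1 1 * v 1 1 * w 1 1) +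
        (u 0 0 * v 0 0 * w 0 1 + u 1 0 * v 1 0 * w 1 1) * (u 0 1 * v 0 1 * w 0 0 + u 1 1 * v 1 1 * w 1 0) -
        (u 0 0 * v 0 1 * w 0 0 + u 1 0 * v 1 1 * w 1 0) * (u 0 1 * v 0 0 * w 0 1 + u 1 1 * v 1 0 * w 1 1) -
        (u 0 0 * v 0 1 * w 0 1 + u 1 0 * v 1 1 * w 1 1) * (u 0 1 * v 0 0 * w 0 0 + u 1 1 * v 1 0 * w 1 0) := by ring
    rw [q1, q8, q4, q5, q3, q6, q7, q2] at this; simpa using this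
  have hff : D * (w 0 1 * w 1 1) = 0 := by
    have : D * (w 0 1 * w 1 1) =
        (u 0 0 * v 0 0 * w 0 1 + u 1 0 * v 1 0 * w 1 1) * (u 0 1 * v 0 1 * w 0 1 + u 1 1 * v 1 1 * w 1 1) -
        (u 0 0 * v 0 1 * w 0 1 + u 1 0 * v 1 1 * w 1 1) * (u 0 1 * v 0 0 * w 0 1 + u 1 1 * v 1 0 * w 1 1) := by ring
    rw [q4, q8, q7, q6] at this; simpa using this
  have hDne : D ≠ 0 := by
    intro h0; rw [h0] at hee; simp at hee
  have hf : w 0 1 = 0 ∨ w 1 1 = 0 := by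
    rcases mul_eq_zero.mp ((mul_eq_zero.mp hff).resolve_left hDne) with h' | h'
    · exact Or.inl h'
    · exact Or.inr h'
  have hE1 : w 0 0 ≠ 0 := by
    intro h0; rw [h0] at hee; simp at hee
  have hE2 : w 1 0 ≠ 0 := by
    intro h0; rw [h0] at hee; simp at hee
  have hef' : w 0 0 * w 1 1 + w 1 0 * w 0 1 = 0 := by
    rcases mul_eq_zero.mp hef with h' | h'
    · exact absurd h' hDne
    · exact h'
  rcases hf with h0 | h0
  · -- w 0 1 = 0, so w 0 0 * w 1 1 = 0, so w 1 1 = 0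
    have : w 1 1 = 0 := by
      have := hef'
      rw [h0] at this
      simpa [hE1] using this
    rw [h0, this] at q4; simpa using q4
  · have : w 0 1 = 0 := by
      have := hef'
      rw [h0] at this
      simpa [hE2] using this
    rw [h0, this] at q4; simpa using q4

/-- The tensor rank of the W-state tensor `W₃` equals 3. -/
theorem stmt9 : trank W3 = 3 := by
  have hmem : 3 ∈ {r | ∃ (u : Fin r → Fin 2 → ℂ) (v : Fin r → Fin 2 → ℂ) (w : Fin r → Fin 2 → ℂ),
      ∀ i j k, W3 i j k = ∑ m, u m i * v m j * w m k} := by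
    refine ⟨![fun i => if i = 1 then 1 else 0, fun i => if i = 0 then 1 else 0,
              fun i => if i = 0 then 1 else 0],
            ![fun j => if j = 0 then 1 else 0, fun j => if j = 1 then 1 else 0,
              fun j => if j = 0 then 1 else 0],
            ![fun k => if k = 0 then 1 else 0, fun k => if k = 0 then 1 else 0,
              fun k => if k = 1 then 1 else 0], ?_⟩
    intro i j k
    fin_cases i <;> fin_cases j <;> fin_cases k <;>
      norm_num [W3, Fin.sum_univ_three, Prod.ext_iff, Matrix.vecHead, Matrix.vecTail, Matrix.cons_val_two, Matrix.cons_val_one, Matrix.cons_val_zero]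
  refine le_antisymm (Nat.sInf_le hmem) (le_csInf ⟨3, hmem⟩ ?_)
  rintro n ⟨u, v, w, h⟩
  by_contra hn
  push_neg at hn
  interval_cases n
  · have := h 1 0 0
    simp [W3] at this
  · exact no_two_term ![u 0, fun _ => 0] ![v 0, fun _ => 0] ![w 0, fun _ => 0]
      (fun i j k => by rw [h i j k]; simp [Fin.sum_univ_two, Fin.sum_univ_one])
  · exact no_two_term u v w h
end

section
/- The border rank of the W-state tensor W₃ ∈ (ℂ²)^{⊗3} equals 2; in particular, W₃ = lim_{ε→0} (1/ε)((e₀+εe₁)⊗(e₀+εe₁)⊗(e₀+εe₁) − e₀⊗e₀⊗e₀), showing W₃ is a limit of rank-2 tensors, and W₃ itself has rank greater than 2. -/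
/-- The border rank: the least `r` such that `t` lies in the closure of the set of
tensors of rank at most `r`. -/
noncomputable def brank {a b c : ℕ} (t : Fin a → Fin b → Fin c → ℂ) : ℕ :=
  sInf {r | t ∈ closure {s : Fin a → Fin b → Fin c → ℂ | trank s ≤ r}}

/-- The coordinates of `e₀ + ε e₁` in `ℂ²`. -/
def aVec (ε : ℂ) : Fin 2 → ℂ := fun i => if i = 0 then 1 else ε

lemma exists_decomp (s : Fin 2 → Fin 2 → Fin 2 → ℂ) :
    ∃ (u : Fin 4 → Fin 2 → ℂ) (v : Fin 4 → Fin 2 → ℂ) (w : Fin 4 → Fin 2 → ℂ),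
      ∀ i j k, s i j k = ∑ m, u m i * v m j * w m k := by
  refine ⟨fun m i => s i (![0,0,1,1] m) (![0,1,0,1] m),
    fun m j => if j = ![0,0,1,1] m then 1 else 0,
    fun m k => if k = ![0,1,0,1] m then 1 else 0, ?_⟩
  intro i j k
  fin_cases j <;> fin_cases k <;> simp [Fin.sum_univ_four]

lemma rank1_flat_aux (s : Fin 2 → Fin 2 → Fin 2 → ℂ) (r : ℕ) (hr : r ≤ 1)
    (u v w : Fin r → Fin 2 → ℂ)
    (hd : ∀ i j k, s i j k = ∑ m, u m i * v m j * w m k) :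
    s 0 0 0 * s 1 1 0 - s 0 1 0 * s 1 0 0 = 0 := by
  interval_cases r
  · simp only [hd]
    simp
  · simp only [hd, Fin.sum_univ_one]
    ring

lemma rank1_flat (s : Fin 2 → Fin 2 → Fin 2 → ℂ) (h : trank s ≤ 1) :
    s 0 0 0 * s 1 1 0 - s 0 1 0 * s 1 0 0 = 0 := by
  have hne : {r | ∃ (u : Fin r → Fin 2 → ℂ) (v : Fin r → Fin 2 → ℂ) (w : Fin r → Fin 2 → ℂ),
      ∀ i j k, s i j k = ∑ m, u m i * v m j * w m k}.Nonempty := ⟨4, exists_decomp s⟩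
  obtain ⟨u, v, w, hd⟩ := Nat.sInf_mem hne
  exact rank1_flat_aux s _ h u v w hd

lemma rank_le_two (ε : ℂ) (hε : ε ≠ 0) : trank
    (fun i j k : Fin 2 =>
      (1 / ε) * (aVec ε i * aVec ε j * aVec ε k -
        (if (i, j, k) = (0, 0, 0) then 1 else 0))) ≤ 2 := by
  apply Nat.sInf_le
  refine ⟨![fun i => (1/ε) * aVec ε i, fun i => -(1/ε) * (if i = 0 then 1 else 0)],
    ![aVec ε, fun j => if j = 0 then 1 else 0],
    ![aVec ε, fun k => if k = 0 then 1 else 0], ?_⟩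
  intro i j k
  fin_cases i <;> fin_cases j <;> fin_cases k <;>
    norm_num [aVec, Fin.sum_univ_two, Prod.ext_iff] <;> field_simp

lemma tendsto_W3 : Filter.Tendsto
    (fun ε : ℂ => fun i j k : Fin 2 =>
      (1 / ε) * (aVec ε i * aVec ε j * aVec ε k -
        (if (i, j, k) = (0, 0, 0) then 1 else 0)))
    (nhdsWithin (0 : ℂ) {0}ᶜ) (nhds W3) := by
  suffices H : ∀ i j k : Fin 2, Filter.Tendsto
      (fun ε : ℂ => (1 / ε) * (aVec ε i * aVec ε j * aVec ε k -
        (if (i, j, k) = (0, 0, 0) then 1 else 0)))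
      (nhdsWithin (0 : ℂ) {0}ᶜ) (nhds (W3 i j k)) by
    rw [tendsto_pi_nhds]; intro i
    rw [tendsto_pi_nhds]; intro j
    rw [tendsto_pi_nhds]; intro k
    exact H i j k
  have hev : ∀ᶠ ε : ℂ in nhdsWithin (0:ℂ) {0}ᶜ, ε ≠ 0 := by
    filter_upwards [self_mem_nhdsWithin] with ε hε using hε
  have t1 : Filter.Tendsto (fun _ : ℂ => (1:ℂ)) (nhdsWithin (0:ℂ) {0}ᶜ) (nhds 1) :=
    tendsto_const_nhds
  have tid : Filter.Tendsto (fun ε : ℂ => ε) (nhdsWithin (0:ℂ) {0}ᶜ) (nhds 0) :=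
    (continuous_id.tendsto 0).mono_left nhdsWithin_le_nhds
  have tsq : Filter.Tendsto (fun ε : ℂ => ε*ε) (nhdsWithin (0:ℂ) {0}ᶜ) (nhds 0) := by
    simpa using tid.mul tid
  have t0 : Filter.Tendsto (fun _ : ℂ => (0:ℂ)) (nhdsWithin (0:ℂ) {0}ᶜ) (nhds 0) :=
    tendsto_const_nhds
  simp only [Fin.forall_fin_two]
  refine ⟨⟨⟨?_, ?_⟩, ⟨?_, ?_⟩⟩, ⟨⟨?_, ?_⟩, ⟨?_, ?_⟩⟩⟩
  · -- 0 0 0 : limit 0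
    have hv : W3 0 0 0 = 0 := by norm_num [W3, Prod.ext_iff]
    rw [hv]
    refine t0.congr' ?_
    filter_upwards [hev] with ε hε
    norm_num [aVec, Prod.ext_iff]
  · -- 0 0 1 : limit 1
    have hv : W3 0 0 1 = 1 := by norm_num [W3, Prod.ext_iff]
    rw [hv]
    refine t1.congr' ?_
    filter_upwards [hev] with ε hε
    norm_num [aVec, Prod.ext_iff]
    field_simp
  · -- 0 1 0 : limit 1
    have hv : W3 0 1 0 = 1 := by norm_num [W3, Prod.ext_iff]
    rw [hv]
    refine t1.congr' ?_
    filter_upwards [hev] with ε hε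
    norm_num [aVec, Prod.ext_iff]
    field_simp
  · -- 0 1 1 : limit 0, g = ε
    have hv : W3 0 1 1 = 0 := by norm_num [W3, Prod.ext_iff]
    rw [hv]
    refine tid.congr' ?_
    filter_upwards [hev] with ε hε
    norm_num [aVec, Prod.ext_iff]
    field_simp
  · -- 1 0 0 : limit 1
    have hv : W3 1 0 0 = 1 := by norm_num [W3, Prod.ext_iff]
    rw [hv]
    refine t1.congr' ?_
    filter_upwards [hev] with ε hε
    norm_num [aVec, Prod.ext_iff]
    field_simp
  · -- 1 0 1 : limit 0, g = ε
    have hv : W3 1 0 1 = 0 := by norm_num [W3, Prod.ext_iff]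
    rw [hv]
    refine tid.congr' ?_
    filter_upwards [hev] with ε hε
    norm_num [aVec, Prod.ext_iff]
    field_simp
  · -- 1 1 0 : limit 0, g = ε
    have hv : W3 1 1 0 = 0 := by norm_num [W3, Prod.ext_iff]
    rw [hv]
    refine tid.congr' ?_
    filter_upwards [hev] with ε hε
    norm_num [aVec, Prod.ext_iff]
    field_simp
  · -- 1 1 1 : limit 0, g = ε*ε
    have hv : W3 1 1 1 = 0 := by norm_num [W3, Prod.ext_iff]
    rw [hv]
    refine tsq.congr' ?_
    filter_upwards [hev] with ε hε
    norm_num [aVec, Prod.ext_iff]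
    field_simp

lemma no_decomp (r : ℕ) (hr : r ≤ 2) (u v w : Fin r → Fin 2 → ℂ)
    (h : ∀ i j k, W3 i j k = ∑ m, u m i * v m j * w m k) : False := by
  interval_cases r
  · have := h 1 0 0
    simp [W3] at this
  · have h000 := h 0 0 0
    have h100 := h 1 0 0
    have h010 := h 0 1 0
    have h110 := h 1 1 0
    norm_num [W3, Fin.sum_univ_one, Prod.ext_iff] at h000 h100 h010 h110
    rcases h000 with (h0 | h0) | h0 <;> simp [h0] at h010 h100
  · have h000 := h 0 0 0
    have h100 := h 1 0 0
    have h010 := h 0 1 0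
    have h001 := h 0 0 1
    have h110 := h 1 1 0
    have h101 := h 1 0 1
    have h011 := h 0 1 1
    have h111 := h 1 1 1
    norm_num [W3, Fin.sum_univ_two, Prod.ext_iff] at h000 h100 h010 h001 h110 h101 h011 h111
    set a1 := u 0 0; set b1 := u 0 1; set a2 := u 1 0; set b2 := u 1 1
    set c1 := v 0 0; set d1 := v 0 1; set c2 := v 1 0; set d2 := v 1 1
    set e1 := w 0 0; set f1 := w 0 1; set e2 := w 1 0; set f2 := w 1 1
    set K := (a1*b2 - a2*b1)*(c1*d2 - c2*d1) with hKdef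
    have p1 : (a1*c1*e1 + a2*c2*e2) * (b1*d1*e1 + b2*d2*e2) = 0 := by rw [← h000]; ring
    have p2 : (a1*d1*e1 + a2*d2*e2) * (b1*c1*e1 + b2*c2*e2) = 1 := by rw [← h010, ← h100]; ring
    have q1 : (a1*c1*e1 + a2*c2*e2) * (b1*d1*f1 + b2*d2*f2) = 0 := by rw [← h000]; ring
    have q2 : (a1*c1*f1 + a2*c2*f2) * (b1*d1*e1 + b2*d2*e2) = 0 := by rw [← h001, ← h110]; ring
    have q3 : (a1*d1*e1 + a2*d2*e2) * (b1*c1*f1 + b2*c2*f2) = 0 := by rw [← h101]; ring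
    have q4 : (a1*d1*f1 + a2*d2*f2) * (b1*c1*e1 + b2*c2*e2) = 0 := by rw [← h011]; ring
    have r1 : (a1*c1*f1 + a2*c2*f2) * (b1*d1*f1 + b2*d2*f2) = 0 := by rw [← h111]; ring
    have r2 : (a1*d1*f1 + a2*d2*f2) * (b1*c1*f1 + b2*c2*f2) = 0 := by rw [← h011]; ring
    have hdet0 : K*e1*e2 = -1 := by linear_combination p1 - p2
    have hMix : K*(e1*f2 + e2*f1) = 0 := by linear_combination q1 + q2 - q3 - q4
    have hdet1 : K*(f1*f2) = 0 := by linear_combination r1 - r2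
    have hf1 : f1 = 0 := by
      have hsq : f1^2 = 0 := by
        linear_combination (f1^2) * hdet0 + (-(e1*f1)) * hMix + (e1^2) * hdet1
      exact pow_eq_zero_iff two_ne_zero |>.mp hsq
    have hf2 : f2 = 0 := by
      have hsq : f2^2 = 0 := by
        linear_combination (f2^2) * hdet0 + (-(e2*f2)) * hMix + (e2^2) * hdet1
      exact pow_eq_zero_iff two_ne_zero |>.mp hsq
    rw [hf1, hf2] at h001
    simp at h001


/-- The border rank of `W₃` equals 2; in particular
`W₃ = lim_{ε→0} (1/ε)((e₀+εe₁)⊗(e₀+εe₁)⊗(e₀+εe₁) − e₀⊗e₀⊗e₀)`, a limit of rank-2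
tensors, while `W₃` itself has rank greater than 2. -/
theorem stmt10 :
    brank W3 = 2 ∧
    Filter.Tendsto
      (fun ε : ℂ => fun i j k : Fin 2 =>
        (1 / ε) * (aVec ε i * aVec ε j * aVec ε k -
          (if (i, j, k) = (0, 0, 0) then 1 else 0)))
      (nhdsWithin (0 : ℂ) {0}ᶜ) (nhds W3) ∧
    (∀ ε : ℂ, ε ≠ 0 → trank
      (fun i j k : Fin 2 =>
        (1 / ε) * (aVec ε i * aVec ε j * aVec ε k -
          (if (i, j, k) = (0, 0, 0) then 1 else 0))) ≤ 2) ∧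
    2 < trank W3 := by
  have hmem2 : W3 ∈ closure {s : Fin 2 → Fin 2 → Fin 2 → ℂ | trank s ≤ 2} := by
    refine mem_closure_of_tendsto tendsto_W3 ?_
    filter_upwards [self_mem_nhdsWithin] with ε hε using rank_le_two ε hε
  have h4 : 2 < trank W3 := by
    have h3le : 3 ≤ trank W3 := by
      unfold trank
      have hne : Set.Nonempty {r : ℕ | ∃ (u : Fin r → Fin 2 → ℂ) (v : Fin r → Fin 2 → ℂ)
          (w : Fin r → Fin 2 → ℂ), ∀ i j k, W3 i j k = ∑ m, u m i * v m j * w m k} :=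
        ⟨4, exists_decomp W3⟩
      apply le_csInf hne
      rintro r ⟨u, v, w, hd⟩
      by_contra h'
      push_neg at h'
      exact no_decomp r (by omega) u v w hd
    omega
  refine ⟨?_, tendsto_W3, fun ε hε => rank_le_two ε hε, h4⟩
  unfold brank
  apply le_antisymm
  · exact Nat.sInf_le hmem2
  · have hbne : Set.Nonempty {r : ℕ |
        W3 ∈ closure {s : Fin 2 → Fin 2 → Fin 2 → ℂ | trank s ≤ r}} := ⟨2, hmem2⟩
    apply le_csInf hbne
    intro r hr
    by_contra h'
    push_neg at h'
    have hr1 : r ≤ 1 := by omega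
    have hsub : {s : Fin 2 → Fin 2 → Fin 2 → ℂ | trank s ≤ r} ⊆
        {s : Fin 2 → Fin 2 → Fin 2 → ℂ | trank s ≤ 1} := fun s hs => hs.trans hr1
    have hW : W3 ∈ closure {s : Fin 2 → Fin 2 → Fin 2 → ℂ | trank s ≤ 1} :=
      closure_mono hsub hr
    have hFcont : Continuous (fun s : Fin 2 → Fin 2 → Fin 2 → ℂ =>
        s 0 0 0 * s 1 1 0 - s 0 1 0 * s 1 0 0) := by fun_prop
    have hcl : closure {s : Fin 2 → Fin 2 → Fin 2 → ℂ | trank s ≤ 1} ⊆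
        {s : Fin 2 → Fin 2 → Fin 2 → ℂ | s 0 0 0 * s 1 1 0 - s 0 1 0 * s 1 0 0 = 0} :=
      closure_minimal (fun s hs => rank1_flat s hs) (isClosed_eq hFcont continuous_const)
    have := hcl hW
    norm_num [W3, Prod.ext_iff] at this
end

section
/- There do not exist three elements x₁, x₂, x₃ in the radical N = (x,y,z) of A = ℂ[x,y,z]/(x²,y²,z²) with x₁x₂ = x₁x₃ = x₂x₃ = 0 such that the images of x₁, x₂, x₃ form a basis of N/N². -/
set_option synthInstance.maxHeartbeats 400000
set_option maxHeartbeats 1000000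

open MvPolynomial

noncomputable section

abbrev P3 := MvPolynomial (Fin 3) ℂ

lemma quad_kill {g : P3} (hg : g ∈ Ideal.span {p : P3 | ∃ i j : Fin 3, p = X i * X j}) :
    constantCoeff g = 0 ∧ ∀ a : Fin 3, constantCoeff (pderiv a g) = 0 := by
  induction hg using Submodule.span_induction with
  | mem p hp =>
    obtain ⟨i, j, rfl⟩ := hp
    exact ⟨by simp, fun a => by simp [pderiv_mul]⟩
  | zero => simp
  | add x y _ _ hx hy =>
    exact ⟨by simp [hx.1, hy.1], fun a => by simp [map_add, hx.2 a, hy.2 a]⟩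
  | smul r x _ hx =>
    rw [smul_eq_mul]
    refine ⟨by simp [hx.1], fun a => ?_⟩
    rw [pderiv_mul]
    simp [hx.1, hx.2 a]

lemma sq_kill {g : P3} (hg : g ∈ Ideal.span (Set.range fun i : Fin 3 => (X i : P3) ^ 2)) :
    constantCoeff g = 0 ∧ (∀ a : Fin 3, constantCoeff (pderiv a g) = 0) ∧
      ∀ a b : Fin 3, a ≠ b → constantCoeff (pderiv a (pderiv b g)) = 0 := by
  induction hg using Submodule.span_induction with
  | mem p hp =>
    obtain ⟨i, rfl⟩ := hp
    refine ⟨by simp, fun a => by simp [pow_two, pderiv_mul], fun a b hab => ?_⟩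
    show constantCoeff (pderiv a (pderiv b (X i ^ 2))) = 0
    rw [pow_two, pderiv_mul]
    by_cases hb : b = i
    · subst hb
      simp [pderiv_mul, pderiv_X_of_ne (Ne.symm hab)]
    · rw [pderiv_X_of_ne (show i ≠ b from fun h => hb h.symm)]
      simp
  | zero => simp
  | add x y _ _ hx hy =>
    exact ⟨by simp [hx.1, hy.1], fun a => by simp [map_add, hx.2.1 a, hy.2.1 a],
      fun a b hab => by simp [map_add, hx.2.2 a b hab, hy.2.2 a b hab]⟩
  | smul r x _ hx =>
    rw [smul_eq_mul]
    refine ⟨by simp [hx.1], fun a => by rw [pderiv_mul]; simp [hx.1, hx.2.1 a], fun a b hab => ?_⟩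
    rw [pderiv_mul, map_add, pderiv_mul, pderiv_mul]
    simp [hx.1, hx.2.1 a, hx.2.1 b, hx.2.2 a b hab]

lemma prod_cond {f g : P3} (hf : constantCoeff f = 0) (hg0 : constantCoeff g = 0)
    (hfg : f * g ∈ Ideal.span (Set.range fun i : Fin 3 => (X i : P3) ^ 2))
    (a b : Fin 3) (hab : a ≠ b) :
    constantCoeff (pderiv a f) * constantCoeff (pderiv b g) +
      constantCoeff (pderiv b f) * constantCoeff (pderiv a g) = 0 := by
  have h := (sq_kill hfg).2.2 a b hab
  rw [pderiv_mul, map_add, pderiv_mul, pderiv_mul] at h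
  simp only [map_add, map_mul, hf, hg0, mul_zero, zero_mul, add_zero, zero_add] at h
  linear_combination h

lemma det_zero_of_orth (M : Matrix (Fin 3) (Fin 3) ℂ)
    (h : ∀ i j a b : Fin 3, i ≠ j → a ≠ b → M i a * M j b + M i b * M j a = 0) :
    M.det = 0 := by
  have h0101 := h 0 1 0 1 (by decide) (by decide)
  have h0102 := h 0 1 0 2 (by decide) (by decide)
  have h0112 := h 0 1 1 2 (by decide) (by decide)
  have h0201 := h 0 2 0 1 (by decide) (by decide)
  have h0202 := h 0 2 0 2 (by decide) (by decide)
  have hd : M.det ^ 2 = 0 := by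
    rw [Matrix.det_fin_three]
    linear_combination
      ((8) * M 0 2 * M 1 2 * M 2 0 * M 2 1 + (-2) * M 0 2 * M 1 1 * M 2 0 * M 2 2 + (-2) * M 0 2 * M 1 0 * M 2 1 * M 2 2 + (-4) * M 0 1 * M 1 2 * M 2 0 * M 2 2 + (1) * M 0 1 * M 1 0 * M 2 2 ^ 2 + (-2) * M 0 0 * M 1 2 * M 2 1 * M 2 2 + (1) * M 0 0 * M 1 1 * M 2 2 ^ 2) * h0101 +
      ((-2) * M 0 2 * M 1 1 * M 2 0 * M 2 1 + (1) * M 0 2 * M 1 0 * M 2 1 ^ 2 + (-2) * M 0 1 * M 1 2 * M 2 0 * M 2 1 + (6) * M 0 1 * M 1 1 * M 2 0 * M 2 2 + (1) * M 0 0 * M 1 2 * M 2 1 ^ 2) * h0102 +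
      ((1) * M 0 2 * M 1 1 * M 2 0 ^ 2 + (1) * M 0 1 * M 1 2 * M 2 0 ^ 2 + (2) * M 0 1 * M 1 0 * M 2 0 * M 2 2 + (4) * M 0 0 * M 1 0 * M 2 1 * M 2 2) * h0112 +
      ((-4) * M 0 2 * M 1 1 * M 1 2 * M 2 0 + (-4) * M 0 2 * M 1 0 * M 1 2 * M 2 1) * h0201 +
      ((-4) * M 0 1 * M 1 0 * M 1 1 * M 2 2) * h0202
  exact pow_eq_zero_iff (n := 2) (by norm_num) |>.mp hd

end

/-- In `A = ℂ[x,y,z]/(x²,y²,z²)` with radical `N = (x,y,z)`, there do not exist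
`x₁, x₂, x₃ ∈ N` with `x₁x₂ = x₁x₃ = x₂x₃ = 0` whose images form a basis of `N/N²`. -/
theorem stmt17 (I : Ideal (MvPolynomial (Fin 3) ℂ))
    (hI : I = Ideal.span (Set.range fun i : Fin 3 => (X i : MvPolynomial (Fin 3) ℂ) ^ 2))
    (N : Ideal (MvPolynomial (Fin 3) ℂ ⧸ I))
    (hN : N = Ideal.span (Set.range fun i : Fin 3 => Ideal.Quotient.mk I (X i))) :
    ¬ ∃ (x₁ x₂ x₃ : MvPolynomial (Fin 3) ℂ ⧸ I)
        (h₁ : x₁ ∈ Submodule.restrictScalars ℂ N)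
        (h₂ : x₂ ∈ Submodule.restrictScalars ℂ N)
        (h₃ : x₃ ∈ Submodule.restrictScalars ℂ N),
      x₁ * x₂ = 0 ∧ x₁ * x₃ = 0 ∧ x₂ * x₃ = 0 ∧
      ∃ b : Module.Basis (Fin 3) ℂ
          ((Submodule.restrictScalars ℂ N) ⧸
            (Submodule.restrictScalars ℂ (N ^ 2)).comap
              (Submodule.restrictScalars ℂ N).subtype),
        b 0 = Submodule.Quotient.mk ⟨x₁, h₁⟩ ∧
        b 1 = Submodule.Quotient.mk ⟨x₂, h₂⟩ ∧
        b 2 = Submodule.Quotient.mk ⟨x₃, h₃⟩ := by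
  rintro ⟨x₁, x₂, x₃, h₁, h₂, h₃, e12, e13, e23, b, hb0, hb1, hb2⟩
  classical
  -- bundle the three elements
  set x : Fin 3 → MvPolynomial (Fin 3) ℂ ⧸ I := ![x₁, x₂, x₃] with hxdef
  have hx : ∀ i, x i ∈ Submodule.restrictScalars ℂ N := by
    intro i; fin_cases i <;> simpa [hxdef]
  have hbx : ∀ i, b i = Submodule.Quotient.mk ⟨x i, hx i⟩ := by
    intro i
    fin_cases i
    · exact hb0
    · exact hb1
    · exact hb2
  -- polynomial representatives
  have hsur : Function.Surjective (Ideal.Quotient.mk I) := Ideal.Quotient.mk_surjective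
  choose f hf using fun i => hsur (x i)
  -- every element of I has vanishing constant coefficient
  have hIkill : ∀ g ∈ I, constantCoeff g = 0 := by
    rw [hI]; intro g hg; exact (sq_kill hg).1
  let eps : (MvPolynomial (Fin 3) ℂ ⧸ I) →+* ℂ := Ideal.Quotient.lift I constantCoeff hIkill
  have hNker : N ≤ RingHom.ker eps := by
    rw [hN]
    apply Ideal.span_le.mpr
    rintro _ ⟨i, rfl⟩
    rw [SetLike.mem_coe, RingHom.mem_ker]
    show Ideal.Quotient.lift I constantCoeff hIkill (Ideal.Quotient.mk I (X i)) = 0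
    rw [Ideal.Quotient.lift_mk]
    simp
  have hccf : ∀ i, constantCoeff (f i) = 0 := by
    intro i
    have h0 : eps (x i) = 0 := hNker (hx i)
    rw [← hf i] at h0
    exact h0
  -- the matrix of linear coefficients
  set V : Matrix (Fin 3) (Fin 3) ℂ :=
    Matrix.of (fun i a => constantCoeff (pderiv a (f i))) with hV
  -- pairwise products vanish
  have hprod : ∀ i j : Fin 3, i ≠ j → x i * x j = 0 := by
    intro i j hij
    fin_cases i <;> fin_cases j <;>
      first
        | exact absurd rfl hij
        | simpa [hxdef] using e12
        | simpa [hxdef] using e13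
        | simpa [hxdef] using e23
        | simpa [hxdef, mul_comm] using e12
        | simpa [hxdef, mul_comm] using e13
        | simpa [hxdef, mul_comm] using e23
  have hcond : ∀ i j a b : Fin 3, i ≠ j → a ≠ b → V i a * V j b + V i b * V j a = 0 := by
    intro i j a b hij hab
    have hmem : f i * f j ∈ I := by
      rw [← Ideal.Quotient.eq_zero_iff_mem, map_mul, hf i, hf j]
      exact hprod i j hij
    rw [hI] at hmem
    exact prod_cond (hccf i) (hccf j) hmem a b hab
  -- coordinates of mk (X a) in the basis b
  have hXa : ∀ a : Fin 3, Ideal.Quotient.mk I (X a) ∈ N := by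
    intro a; rw [hN]; exact Ideal.subset_span ⟨a, rfl⟩
  let y : Fin 3 → Submodule.restrictScalars ℂ N := fun a => ⟨Ideal.Quotient.mk I (X a), hXa a⟩
  let c : Fin 3 → Fin 3 → ℂ := fun a i => b.repr (Submodule.Quotient.mk (y a)) i
  have key3 : ∀ a : Fin 3, Ideal.Quotient.mk I (X a) - ∑ i, c a i • x i ∈ N ^ 2 := by
    intro a
    have key2 : y a - ∑ i, c a i • (⟨x i, hx i⟩ : Submodule.restrictScalars ℂ N) ∈
        (Submodule.restrictScalars ℂ (N ^ 2)).comap (Submodule.restrictScalars ℂ N).subtype := by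
      have hq : (Submodule.Quotient.mk (y a) :
            (Submodule.restrictScalars ℂ N) ⧸ (Submodule.restrictScalars ℂ (N ^ 2)).comap
              (Submodule.restrictScalars ℂ N).subtype) =
          Submodule.Quotient.mk (∑ i, c a i • (⟨x i, hx i⟩ : Submodule.restrictScalars ℂ N)) := by
        have hsum : (Submodule.Quotient.mk
              (∑ i, c a i • (⟨x i, hx i⟩ : Submodule.restrictScalars ℂ N)) :
            (Submodule.restrictScalars ℂ N) ⧸ (Submodule.restrictScalars ℂ (N ^ 2)).comap
              (Submodule.restrictScalars ℂ N).subtype) = ∑ i, c a i • b i := by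
          rw [← Submodule.mkQ_apply, map_sum]
          simp only [map_smul, Submodule.mkQ_apply, hbx]
        rw [hsum]
        show Submodule.Quotient.mk (y a) =
          ∑ i, b.repr (Submodule.Quotient.mk (y a)) i • b i
        exact (b.sum_repr _).symm
      exact (Submodule.Quotient.eq _).mp hq
    rw [Submodule.mem_comap] at key2
    simpa using key2
  -- representatives of elements of N²
  have hN2 : ∀ u ∈ N ^ 2, ∃ g : MvPolynomial (Fin 3) ℂ, Ideal.Quotient.mk I g = u ∧
      constantCoeff g = 0 ∧ ∀ a : Fin 3, constantCoeff (pderiv a g) = 0 := by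
    intro u hu
    rw [hN, pow_two, Ideal.span_mul_span'] at hu
    induction hu using Submodule.span_induction with
    | mem z hz =>
      rw [Set.mem_mul] at hz
      obtain ⟨p, ⟨i, rfl⟩, q, ⟨j, rfl⟩, rfl⟩ := hz
      have hq := quad_kill (g := X i * X j) (Ideal.subset_span ⟨i, j, rfl⟩)
      exact ⟨X i * X j, by exact map_mul _ _ _, hq.1, hq.2⟩
    | zero => exact ⟨0, by simp, by simp, by simp⟩
    | add u v _ _ hu hv =>
      obtain ⟨g₁, hg₁, hc₁, hd₁⟩ := hu
      obtain ⟨g₂, hg₂, hc₂, hd₂⟩ := hv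
      exact ⟨g₁ + g₂, by rw [map_add, hg₁, hg₂], by simp [hc₁, hc₂],
        fun a => by simp [map_add, hd₁ a, hd₂ a]⟩
    | smul r u _ hu =>
      obtain ⟨g, hg, hc, hd⟩ := hu
      obtain ⟨h, rfl⟩ := hsur r
      refine ⟨h * g, by rw [map_mul, hg]; rfl, by simp [hc], fun a => ?_⟩
      rw [pderiv_mul]
      simp [hc, hd a]
  -- main coordinate identity
  have main : ∀ a a' : Fin 3, (∑ i, c a i * V i a') = if a = a' then 1 else 0 := by
    intro a a'
    obtain ⟨g, hg, hgc, hgd⟩ := hN2 _ (key3 a)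
    have hmkeq : Ideal.Quotient.mk I (X a - ∑ i, c a i • f i) = Ideal.Quotient.mk I g := by
      rw [hg]
      calc Ideal.Quotient.mk I (X a - ∑ i, c a i • f i)
          = Ideal.Quotient.mkₐ ℂ I (X a - ∑ i, c a i • f i) := rfl
        _ = Ideal.Quotient.mkₐ ℂ I (X a) - ∑ i, c a i • Ideal.Quotient.mkₐ ℂ I (f i) := by
            rw [map_sub, map_sum]
            simp only [map_smul]
        _ = Ideal.Quotient.mk I (X a) - ∑ i, c a i • x i := by
            simp only [Ideal.Quotient.mkₐ_eq_mk, hf]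
    have hdiff : (X a - ∑ i, c a i • f i) - g ∈ I := Ideal.Quotient.eq.mp hmkeq
    rw [hI] at hdiff
    have h2 := (sq_kill hdiff).2.1 a'
    simp only [map_sub, map_sum, smul_eq_C_mul, pderiv_C_mul, map_mul, constantCoeff_C,
      hgd a'] at h2
    have hXa' : constantCoeff (pderiv a' (X a : MvPolynomial (Fin 3) ℂ)) =
        if a = a' then 1 else 0 := by
      by_cases h : a = a'
      · subst h; simp
      · rw [pderiv_X_of_ne h]; simp [h]
    rw [hXa'] at h2
    have hfin : (∑ i, c a i * constantCoeff (pderiv a' (f i))) = if a = a' then 1 else 0 := by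
      linear_combination -h2
    simpa [hV] using hfin
  -- conclude via matrices
  set C : Matrix (Fin 3) (Fin 3) ℂ := Matrix.of (fun a i => c a i) with hC
  have hCV : C * V = 1 := by
    ext a a'
    rw [Matrix.mul_apply]
    simpa [hC, Matrix.one_apply] using main a a'
  have hdetV : V.det ≠ 0 := by
    intro h0
    have h1 := congrArg Matrix.det hCV
    rw [Matrix.det_mul, h0, mul_zero, Matrix.det_one] at h1
    exact one_ne_zero h1.symm
  exact hdetV (det_zero_of_orth V hcond)
end
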